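/- In a pregeometry (X, cl), if w₁,…,wₙ and v₁,…,vₙ are tuples independent over a set C such that for each i, wᵢ ∈ cl(C ∪ {v₁,…,vᵢ}), then for each i, vᵢ ∈ cl(C ∪ {w₁,…,wᵢ}); that is, wᵢ and vᵢ are interdependent over C ∪ {v₁,…,vᵢ₋₁}. -/

import Mathlib

structure Pregeometry (X : Type*) where
  cl : Set X → Set X
  subset_cl : ∀ A : Set X, A ⊆ cl A
  cl_cl : ∀ A : Set X, cl (cl A) = cl A
  mono : ∀ {A B : Set X}, A ⊆ B → cl A ⊆ cl B
  finite_character : ∀ (A : Set X) (x : X), x ∈ cl A →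
    ∃ B : Set X, B ⊆ A ∧ B.Finite ∧ x ∈ cl B
  exchange : ∀ (A : Set X) (a b : X), a ∈ cl (A ∪ {b}) → a ∉ cl A → b ∈ cl (A ∪ {a})

/-- A set is independent if no element is in the closure of the others. -/
def Pregeometry.Indep {X : Type*} (P : Pregeometry X) (A : Set X) : Prop :=
  ∀ a ∈ A, a ∉ P.cl (A \ {a})

/-- A tuple is independent over C if no entry is in the closure of C together
with the other entries. -/
def Pregeometry.IndepOver {X : Type*} (P : Pregeometry X) (C : Set X)
    {n : ℕ} (w : Fin n → X) : Prop :=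
  ∀ i : Fin n, w i ∉ P.cl (C ∪ w '' {j | j ≠ i})

/-!
Strong induction on `i`. The induction hypothesis gives
`cl (C ∪ v '' Iio i) ⊆ cl (C ∪ w '' Iio i)`, so independence of `w` keeps `w i` out of
`cl (C ∪ v '' Iio i)`, while `w i ∈ cl (C ∪ v '' Iio i ∪ {v i})`; exchange then puts `v i` in
`cl (C ∪ v '' Iio i ∪ {w i}) ⊆ cl (C ∪ w '' Iic i)`.
-/

open Set

namespace Pregeometry

variable {X : Type*} (P : Pregeometry X)

theorem cl_subset_cl {A B : Set X} (h : A ⊆ P.cl B) : P.cl A ⊆ P.cl B :=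
  P.cl_cl B ▸ P.mono h

theorem cl_union_subset_cl_union {A B : Set X} (h : P.cl A ⊆ P.cl B) (D : Set X) :
    P.cl (A ∪ D) ⊆ P.cl (B ∪ D) :=
  P.cl_subset_cl <| union_subset
    ((P.subset_cl A).trans (h.trans (P.mono subset_union_left)))
    (subset_union_right.trans (P.subset_cl _))

theorem cl_union_image_subset {ι κ : Type*} {C : Set X} {v : ι → X} {w : κ → X}
    {s : Set ι} {t : Set κ} (h : ∀ j ∈ s, v j ∈ P.cl (C ∪ w '' t)) :
    P.cl (C ∪ v '' s) ⊆ P.cl (C ∪ w '' t) :=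
  P.cl_subset_cl <| union_subset
    (subset_union_left.trans (P.subset_cl _)) (image_subset_iff.2 h)

end Pregeometry

theorem Set.union_image_Iic {X ι : Type*} [PartialOrder ι] (C : Set X) (f : ι → X) (i : ι) :
    C ∪ f '' Iic i = (C ∪ f '' Iio i) ∪ {f i} := by
  rw [← Iio_insert, image_insert_eq, union_singleton, union_insert]

theorem stmt3_general {X : Type*} (P : Pregeometry X) (C : Set X) (n : ℕ)
    (w v : Fin n → X)
    (hw : P.IndepOver C w)
    (h : ∀ i : Fin n, w i ∈ P.cl (C ∪ v '' {j | j ≤ i})) :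
    ∀ i : Fin n, v i ∈ P.cl (C ∪ w '' {j | j ≤ i}) := by
  intro i
  induction i using WellFoundedLT.induction with
  | ind i IH =>
  have hprev : P.cl (C ∪ v '' Iio i) ⊆ P.cl (C ∪ w '' Iio i) :=
    P.cl_union_image_subset fun j hj =>
      P.mono (union_subset_union_right C (image_mono (Iic_subset_Iio.2 hj))) (IH j hj)
  have hwi : w i ∉ P.cl (C ∪ v '' Iio i) := fun hmem =>
    hw i (P.mono (union_subset_union_right C (image_mono fun _ hj => ne_of_lt hj))
      (hprev hmem))
  have hwv : w i ∈ P.cl (C ∪ v '' Iio i ∪ {v i}) := union_image_Iic C v i ▸ h i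
  change v i ∈ P.cl (C ∪ w '' Iic i)
  rw [union_image_Iic]
  exact P.cl_union_subset_cl_union hprev {w i} (P.exchange _ (w i) (v i) hwv hwi)

/-- If w and v are tuples independent over C with wᵢ ∈ cl(C ∪ {v₁,…,vᵢ}) for each i,
then vᵢ ∈ cl(C ∪ {w₁,…,wᵢ}) for each i. -/
theorem stmt3 {X : Type*} (P : Pregeometry X) (C : Set X) (n : ℕ)
    (w v : Fin n → X)
    (hw : P.IndepOver C w) (hv : P.IndepOver C v)
    (h : ∀ i : Fin n, w i ∈ P.cl (C ∪ v '' {j | j ≤ i})) :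
    ∀ i : Fin n, v i ∈ P.cl (C ∪ w '' {j | j ≤ i}) :=
  stmt3_general P C n w v hw h
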